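/- arXiv:0709.3595 — 2 statements merged into one kernel-verified Lean document; each statement's English description precedes it below -/
import Mathlib

section
/- Let h : [0,∞) → [0,∞) be a gauge function (vanishing at 0, continuous and nondecreasing near 0, with h(r)/r positive and nonincreasing near 0) and τ > 2. If ∑_{q=1}^∞ h(q^{-τ}) · q < ∞, then the set J_τ of τ-approximable real numbers has Hausdorff h-measure zero. -/
/-!
Hausdorff–Cantelli argument. A point of `J_τ ∩ [-N, N]` lies in infinitely many of the balls
`B(p/q, q^{-τ})` with `|p| ≤ (N + 1) q`. For each `q` there are `2(N + 1)q + 1` of them, each of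
diameter `2 q^{-τ}`, and `h(2 q^{-τ}) ≤ 2 h(q^{-τ})` because `h(r)/r` is nonincreasing; so the
`h`-diameters of the whole family sum to at most a multiple of `∑ q h(q^{-τ}) < ∞`. A set of
points lying in infinitely many members of a family with finite total `h`-diameter and
diameters tending to `0` has `h`-measure zero, since it is covered by every cofinite subfamily.
-/

open Filter MeasureTheory Set ENNReal Topology Metric

theorem apply_mul_le_mul_apply_of_antitoneOn_div {h : ℝ → ℝ} {s : Set ℝ}
    (hanti : AntitoneOn (fun r => h r / r) s) {c r : ℝ} (hr : r ∈ s) (hcr : c * r ∈ s)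
    (hr0 : 0 < r) (hc : 1 ≤ c) : h (c * r) ≤ c * h r := by
  have hcr0 : 0 < c * r := by positivity
  have := hanti hr hcr (le_mul_of_one_le_left hr0.le hc)
  rw [div_le_div_iff₀ hcr0 hr0] at this
  nlinarith

theorem tendsto_two_mul_natCast_rpow_neg {τ : ℝ} (hτ : 0 < τ) :
    Tendsto (fun q : ℕ => 2 * (q : ℝ) ^ (-τ)) atTop (𝓝 0) := by
  simpa using ((tendsto_rpow_neg_atTop hτ).comp tendsto_natCast_atTop_atTop).const_mul 2

theorem Real.ediam_ball (c r : ℝ) : ediam (ball c r) = ENNReal.ofReal (2 * r) := by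
  rw [Real.ball_eq_Ioo, Real.ediam_Ioo]
  ring_nf

theorem MeasureTheory.Measure.mkMetric_setOf_infinite_mem_eq_zero {X ι : Type*}
    [EMetricSpace X] [MeasurableSpace X] [BorelSpace X] [Countable ι] (m : ℝ≥0∞ → ℝ≥0∞)
    (E : ι → Set X) (hdiam : Tendsto (fun i => ediam (E i)) Filter.cofinite (𝓝 0))
    (hsum : ∑' i, m (ediam (E i)) ≠ ∞) :
    Measure.mkMetric m {x | {i | x ∈ E i}.Infinite} = 0 := by
  refine le_antisymm ?_ zero_le
  have hr : Tendsto (fun F : Finset ι => ⨆ i : {i // i ∉ F}, ediam (E i)) atTop (𝓝 0) := by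
    refine ENNReal.tendsto_nhds_zero.2 fun δ hδ => ?_
    obtain ⟨F, hF⟩ : ∃ F : Finset ι, ∀ i ∉ F, ediam (E i) ≤ δ :=
      ⟨(hdiam.eventually (eventually_le_nhds hδ)).toFinset, fun i hi =>
        not_not.1 fun h => hi ((Finite.mem_toFinset _).2 h)⟩
    filter_upwards [eventually_ge_atTop F] with G hG
    exact iSup_le fun i => hF i fun hi => i.2 (hG hi)
  calc Measure.mkMetric m {x | {i | x ∈ E i}.Infinite}
      ≤ liminf (fun F : Finset ι => ∑' i : {i // i ∉ F}, m (ediam (E i))) atTop :=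
        Measure.mkMetric_le_liminf_tsum _ _ hr (fun F (i : {i // i ∉ F}) => E i)
          (Eventually.of_forall fun F i => le_iSup (fun i : {i // i ∉ F} => ediam (E i)) i)
          (Eventually.of_forall fun F x hx => by
            obtain ⟨i, hxi, hiF⟩ := hx.exists_notMem_finset F
            exact mem_iUnion.2 ⟨⟨i, hiF⟩, hxi⟩) m
    _ = 0 := (ENNReal.tendsto_tsum_compl_atTop_zero hsum).liminf_eq

def approximants (τ x : ℝ) : Set (ℤ × ℕ) :=
  {pq | 0 < pq.2 ∧ |x - (pq.1 : ℝ) / pq.2| < (pq.2 : ℝ) ^ (-τ)}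

/-- The fractions `p / q ∈ [-K, K]`, indexed by `(q, p)` so that sums over them split into
finite sums over `p` for each `q`. -/
abbrev FractionIndex (K : ℕ) : Type := Σ q : ℕ, Finset.Icc (-(K * q : ℤ)) (K * q)

namespace FractionIndex

theorem tendsto_fst_cofinite (K : ℕ) :
    Tendsto (Sigma.fst : FractionIndex K → ℕ) Filter.cofinite atTop :=
  Nat.cofinite_eq_atTop ▸ Tendsto.cofinite_of_finite_preimage_singleton fun q =>
    ((Set.finite_range (Sigma.mk q : _ → FractionIndex K)).subset (by
      rintro ⟨q', p⟩ rfl; exact ⟨p, rfl⟩)).to_subtype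

theorem tsum_eq (K : ℕ) (f : ℕ → ℝ≥0∞) :
    ∑' i : FractionIndex K, f i.1 = ∑' q, ((2 * K * q + 1 : ℕ) : ℝ≥0∞) * f q := by
  rw [ENNReal.tsum_sigma']
  congr 1 with q
  simp only [tsum_fintype, Finset.sum_const, Finset.card_univ, Fintype.card_coe, Int.card_Icc,
    nsmul_eq_mul]
  rw [show (K * q + 1 - -(K * q) : ℤ) = (2 * K * q + 1 : ℕ) by push_cast; ring,
    Int.toNat_natCast]

end FractionIndex

theorem abs_int_le_of_abs_sub_div_lt_one {x : ℝ} {p : ℤ} {q N : ℕ} (hq : 0 < q) (hx : |x| ≤ N)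
    (happ : |x - p / q| < 1) : |p| ≤ (N + 1 : ℕ) * (q : ℤ) := by
  have hq' : (0 : ℝ) < q := by exact_mod_cast hq
  have : |(p : ℝ) / q| < N + 1 := by
    calc |(p : ℝ) / q| ≤ |x| + |x - p / q| := by
          simpa [abs_sub_comm, add_comm] using abs_sub_abs_le_abs_sub ((p : ℝ) / q) x
      _ < N + 1 := by linarith
  rw [abs_div, Nat.abs_cast, div_lt_iff₀ hq'] at this
  exact_mod_cast this.le

theorem setOf_infinite_approximants_inter_Icc_subset {τ : ℝ} (hτ : 0 ≤ τ) (N : ℕ) :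
    {x | (approximants τ x).Infinite} ∩ Icc (-(N : ℝ)) N ⊆
      {x | {i : FractionIndex (N + 1) |
        x ∈ ball ((i.2 : ℤ) / i.1 : ℝ) ((i.1 : ℝ) ^ (-τ))}.Infinite} := by
  rintro x ⟨hx, hxN⟩
  have hrange : approximants τ x ⊆ range fun i : FractionIndex (N + 1) => ((i.2 : ℤ), i.1) := by
    rintro ⟨p, q⟩ ⟨hq, happ⟩
    have hr : (q : ℝ) ^ (-τ) ≤ 1 :=
      Real.rpow_le_one_of_one_le_of_nonpos (by exact_mod_cast hq) (neg_nonpos.2 hτ)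
    have hp := abs_le.1 (abs_int_le_of_abs_sub_div_lt_one hq (abs_le.2 hxN) (happ.trans_le hr))
    exact ⟨⟨q, p, Finset.mem_Icc.2 ⟨by linarith, hp.2⟩⟩, rfl⟩
  refine (hx.preimage hrange).mono ?_
  rintro ⟨q, p⟩ ⟨-, happ⟩
  rwa [mem_ofPred_eq, mem_ball, Real.dist_eq]

theorem tendsto_ediam_ball_fractionIndex {τ : ℝ} (hτ : 0 < τ) (K : ℕ) :
    Tendsto (fun i : FractionIndex K => ediam (ball ((i.2 : ℤ) / i.1 : ℝ) ((i.1 : ℝ) ^ (-τ))))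
      Filter.cofinite (𝓝 0) := by
  simp_rw [Real.ediam_ball]
  have := ENNReal.tendsto_ofReal (tendsto_two_mul_natCast_rpow_neg hτ)
  rw [ENNReal.ofReal_zero] at this
  exact this.comp (FractionIndex.tendsto_fst_cofinite K)

theorem summable_mul_apply_two_mul_natCast_rpow_neg {τ ε : ℝ} (hτ : 0 < τ) (hε : 0 < ε)
    {h : ℝ → ℝ} (hpos : ∀ r ∈ Ioc 0 ε, 0 < h r / r)
    (hanti : AntitoneOn (fun r => h r / r) (Ioc 0 ε))
    (hsum : Summable fun q : ℕ => h ((q : ℝ) ^ (-τ)) * q) (K : ℕ) :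
    Summable fun q : ℕ => ((2 * K * q + 1 : ℕ) : ℝ) * h (2 * (q : ℝ) ^ (-τ)) := by
  refine Summable.of_norm_bounded_eventually_nat (hsum.mul_left (2 * (2 * K + 1) : ℝ)) ?_
  filter_upwards [eventually_ge_atTop 1,
    (tendsto_two_mul_natCast_rpow_neg hτ).eventually (eventually_le_nhds hε)] with q hq hqε
  set r := (q : ℝ) ^ (-τ)
  have hr0 : 0 < r := Real.rpow_pos_of_pos (by exact_mod_cast hq) _
  have h2r : 2 * r ∈ Ioc 0 ε := ⟨by positivity, hqε⟩
  have hdouble := apply_mul_le_mul_apply_of_antitoneOn_div hanti ⟨hr0, by linarith⟩ h2r hr0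
    one_le_two
  have hh2r : 0 < h (2 * r) := (div_pos_iff_of_pos_right h2r.1).1 (hpos _ h2r)
  have hcount : ((2 * K * q + 1 : ℕ) : ℝ) ≤ (2 * K + 1) * q := by
    have : (1 : ℝ) ≤ q := by exact_mod_cast hq
    push_cast; nlinarith
  rw [Real.norm_of_nonneg (by positivity)]
  calc ((2 * K * q + 1 : ℕ) : ℝ) * h (2 * r) ≤ ((2 * K + 1) * q) * (2 * h r) := by gcongr
    _ = 2 * (2 * K + 1) * (h r * q) := by ring

theorem tsum_gauge_ediam_ball_fractionIndex_ne_top {τ ε : ℝ} (hτ : 0 < τ) (hε : 0 < ε)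
    {h : ℝ → ℝ} (hpos : ∀ r ∈ Ioc 0 ε, 0 < h r / r)
    (hanti : AntitoneOn (fun r => h r / r) (Ioc 0 ε))
    (hsum : Summable fun q : ℕ => h ((q : ℝ) ^ (-τ)) * q) (K : ℕ) :
    ∑' i : FractionIndex K,
      ENNReal.ofReal (h (ediam (ball ((i.2 : ℤ) / i.1 : ℝ) ((i.1 : ℝ) ^ (-τ)))).toReal) ≠ ∞ := by
  have hdiam (q : ℕ) : (ENNReal.ofReal (2 * (q : ℝ) ^ (-τ))).toReal = 2 * (q : ℝ) ^ (-τ) :=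
    ENNReal.toReal_ofReal (by positivity)
  simp_rw [Real.ediam_ball]
  rw [FractionIndex.tsum_eq K fun q =>
    ENNReal.ofReal (h (ENNReal.ofReal (2 * (q : ℝ) ^ (-τ))).toReal)]
  simp_rw [hdiam, ← ENNReal.ofReal_natCast, ← ENNReal.ofReal_mul (Nat.cast_nonneg _)]
  exact ENNReal.tsum_coe_ne_top_iff_summable.2
    (summable_mul_apply_two_mul_natCast_rpow_neg hτ hε hpos hanti hsum K).toNNReal

theorem stmt3_general (τ : ℝ) (hτ : 2 < τ) (h : ℝ → ℝ)
    (hgauge : ∃ ε > 0, ContinuousOn h (Set.Icc 0 ε) ∧ MonotoneOn h (Set.Icc 0 ε) ∧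
      (∀ r ∈ Set.Ioc 0 ε, 0 < h r / r) ∧ AntitoneOn (fun r => h r / r) (Set.Ioc 0 ε))
    (hsum : Summable fun q : ℕ => h ((q : ℝ) ^ (-τ)) * q) :
    MeasureTheory.Measure.mkMetric (fun r => ENNReal.ofReal (h r.toReal))
      {x : ℝ |
        {pq : ℤ × ℕ | 0 < pq.2 ∧ |x - (pq.1 : ℝ) / pq.2| < (pq.2 : ℝ) ^ (-τ)}.Infinite} = 0 := by
  obtain ⟨ε, hε, -, -, hpos, hanti⟩ := hgauge
  have hτ0 : 0 < τ := by linarith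
  have hcover : {x | (approximants τ x).Infinite} ⊆
      ⋃ N : ℕ, {x | (approximants τ x).Infinite} ∩ Icc (-(N : ℝ)) N := fun x hx =>
    mem_iUnion.2 ⟨⌈|x|⌉₊, hx, abs_le.1 (Nat.le_ceil _)⟩
  refine measure_mono_null hcover (measure_iUnion_null fun N => ?_)
  exact measure_mono_null (setOf_infinite_approximants_inter_Icc_subset hτ0.le N)
    (Measure.mkMetric_setOf_infinite_mem_eq_zero _ _ (tendsto_ediam_ball_fractionIndex hτ0 _)
      (tsum_gauge_ediam_ball_fractionIndex_ne_top hτ0 hε hpos hanti hsum _))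

/-- If `h` is a gauge function, `τ > 2` and `∑_q h(q^{-τ}) q < ∞`, then `J_τ` has
Hausdorff `h`-measure zero. -/
theorem stmt3 (τ : ℝ) (hτ : 2 < τ) (h : ℝ → ℝ) (hh0 : h 0 = 0)
    (hgauge : ∃ ε > 0, ContinuousOn h (Set.Icc 0 ε) ∧ MonotoneOn h (Set.Icc 0 ε) ∧
      (∀ r ∈ Set.Ioc 0 ε, 0 < h r / r) ∧ AntitoneOn (fun r => h r / r) (Set.Ioc 0 ε))
    (hsum : Summable fun q : ℕ => h ((q : ℝ) ^ (-τ)) * q) :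
    MeasureTheory.Measure.mkMetric (fun r => ENNReal.ofReal (h r.toReal))
      {x : ℝ |
        {pq : ℤ × ℕ | 0 < pq.2 ∧ |x - (pq.1 : ℝ) / pq.2| < (pq.2 : ℝ) ^ (-τ)}.Infinite} = 0 :=
  stmt3_general τ hτ h hgauge hsum
end

section
/- Let β ∈ (0,d] and φ ∈ Φ. For h = h_{β,φ}(r) = r^{β-φ(r)}, there is η > 0 such that for all r_1, r_2 ∈ (0,η) with r_1 ≤ r_2, limsup_{κ → 0} h(κ r_1)/h(κ r_2) ≤ h(r_1)/h(r_2). -/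
open Set Filter Topology

/-- `h ∈ 𝔇_d`: gauge function. -/
def IsGauge (d : ℕ) (h : ℝ → ℝ) : Prop :=
  h 0 = 0 ∧ ∃ ε > 0, ContinuousOn h (Icc 0 ε) ∧ MonotoneOn h (Icc 0 ε) ∧
    (∀ r ∈ Ioc 0 ε, 0 < h r / r ^ d) ∧ AntitoneOn (fun r => h r / r ^ d) (Ioc 0 ε)

/-- `φ ∈ Φ`: continuous, nondecreasing, vanishing at `0` near the origin,
`r^{-φ(r)}` monotonically tends to `∞` at `0`, and for every `ε > 0` the function
`r ↦ r^{ε - φ(r)}` tends to `0` at `0` and increases near `0`. -/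
def IsPhi (φ : ℝ → ℝ) : Prop :=
  (∃ ρ > 0, ContinuousOn φ (Icc 0 ρ) ∧ MonotoneOn φ (Icc 0 ρ)) ∧ φ 0 = 0 ∧
  Tendsto (fun r => r ^ (-φ r)) (nhdsWithin 0 (Ioi 0)) atTop ∧
  (∃ ρ > 0, AntitoneOn (fun r => r ^ (-φ r)) (Ioc 0 ρ)) ∧
  ∀ ε > 0, Tendsto (fun r => r ^ (ε - φ r)) (nhdsWithin 0 (Ioi 0)) (nhds 0) ∧
    ∃ ρε > 0, StrictMonoOn (fun r => r ^ (ε - φ r)) (Ioc 0 ρε)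

/-!
For small `κ`, monotonicity of `φ` gives `φ(κ r₁) ≤ φ(κ r₂)`, so the factor `κ^{φ(κ r₂) - φ(κ r₁)}`
coming from `h(κ r₁) / h(κ r₂)` is at most `1`; what remains, `r₁^{β - φ(κ r₁)} / r₂^{β - φ(κ r₂)}`,
tends to `r₁^β / r₂^β` because `φ` is continuous with `φ 0 = 0`. Finally `r₁^β / r₂^β ≤ h(r₁) / h(r₂)`
is the monotonicity of `r ↦ r^{-φ(r)}`.
-/

theorem tendsto_mul_const_nhdsGT_zero {r : ℝ} (hr : 0 < r) :
    Tendsto (fun κ : ℝ => κ * r) (𝓝[>] 0) (𝓝[>] 0) :=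
  tendsto_nhdsWithin_of_tendsto_nhds_of_eventually_within _
    (by simpa using ((continuous_mul_const r).tendsto 0).mono_left nhdsWithin_le_nhds)
    (eventually_nhdsWithin_of_forall fun _ hκ => mul_pos hκ hr)

theorem ContinuousOn.tendsto_nhdsGT_zero {φ : ℝ → ℝ} {ρ : ℝ} (h : ContinuousOn φ (Icc 0 ρ))
    (hρ : 0 < ρ) : Tendsto φ (𝓝[>] 0) (𝓝 (φ 0)) :=
  (h 0 ⟨le_rfl, hρ.le⟩).mono_of_mem_nhdsWithin (Icc_mem_nhdsGT hρ)

theorem tendsto_rpow_sub_comp_mul {φ : ℝ → ℝ} {ρ r : ℝ} (hcont : ContinuousOn φ (Icc 0 ρ))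
    (hρ : 0 < ρ) (hφ0 : φ 0 = 0) (β : ℝ) (hr : 0 < r) :
    Tendsto (fun κ => r ^ (β - φ (κ * r))) (𝓝[>] 0) (𝓝 (r ^ β)) := by
  have hφr := (hcont.tendsto_nhdsGT_zero hρ).comp (tendsto_mul_const_nhdsGT_zero hr)
  have hexp := tendsto_const_nhds (x := β) |>.sub hφr
  rw [hφ0, sub_zero] at hexp
  exact (Real.continuousAt_const_rpow hr.ne').tendsto.comp hexp

theorem mul_rpow_div_mul_rpow_le {κ r₁ r₂ β a b : ℝ} (hκ₀ : 0 < κ) (hκ₁ : κ ≤ 1) (hr₁ : 0 ≤ r₁)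
    (hr₂ : 0 ≤ r₂) (hab : a ≤ b) :
    (κ * r₁) ^ (β - a) / (κ * r₂) ^ (β - b) ≤ r₁ ^ (β - a) / r₂ ^ (β - b) := by
  rw [Real.mul_rpow hκ₀.le hr₁, Real.mul_rpow hκ₀.le hr₂, mul_div_mul_comm]
  have hκ : κ ^ (β - a) / κ ^ (β - b) ≤ 1 :=
    div_le_one_of_le₀ (Real.rpow_le_rpow_of_exponent_ge hκ₀ hκ₁ (by linarith)) (by positivity)
  exact mul_le_of_le_one_left (by positivity) hκ

theorem rpow_div_rpow_le_rpow_sub_div_rpow_sub {r₁ r₂ β a b : ℝ} (hr₁ : 0 < r₁) (hr₂ : 0 < r₂)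
    (h : r₂ ^ (-b) ≤ r₁ ^ (-a)) : r₁ ^ β / r₂ ^ β ≤ r₁ ^ (β - a) / r₂ ^ (β - b) := by
  rw [sub_eq_add_neg, sub_eq_add_neg, Real.rpow_add hr₁, Real.rpow_add hr₂, mul_div_mul_comm]
  exact le_mul_of_one_le_right (by positivity) ((one_le_div (by positivity)).2 h)

theorem limsup_le_of_eventually_le_of_tendsto {α : Type*} {l : Filter α} [l.NeBot]
    {f g : α → ℝ} {c : ℝ} (hf : IsBoundedUnder (· ≥ ·) l f) (hfg : f ≤ᶠ[l] g)
    (hg : Tendsto g l (𝓝 c)) : limsup f l ≤ c :=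
  hg.limsup_eq ▸ limsup_le_limsup hfg hf.isCoboundedUnder_le hg.isBoundedUnder_le

theorem stmt16_general (β : ℝ) (φ : ℝ → ℝ) (hφ : IsPhi φ) :
    ∃ η > 0, ∀ r1 r2 : ℝ, 0 < r1 → r1 ≤ r2 → r2 < η →
      Filter.limsup
        (fun κ => (κ * r1) ^ (β - φ (κ * r1)) / (κ * r2) ^ (β - φ (κ * r2)))
        (nhdsWithin 0 (Set.Ioi 0)) ≤ r1 ^ (β - φ r1) / r2 ^ (β - φ r2) := by
  obtain ⟨⟨ρ₁, hρ₁, hcont, hmono⟩, hφ0, -, ⟨ρ₂, hρ₂, hanti⟩, -⟩ := hφ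
  refine ⟨min ρ₁ ρ₂, lt_min hρ₁ hρ₂, fun r1 r2 hr1 h12 hr2η => ?_⟩
  have hr2 : 0 < r2 := hr1.trans_le h12
  have hle : ∀ᶠ κ in 𝓝[>] 0, (κ * r1) ^ (β - φ (κ * r1)) / (κ * r2) ^ (β - φ (κ * r2)) ≤
      r1 ^ (β - φ (κ * r1)) / r2 ^ (β - φ (κ * r2)) := by
    filter_upwards [Ioo_mem_nhdsGT (lt_min one_pos (div_pos hρ₁ hr2))] with κ ⟨hκ₀, hκ⟩
    have hκr2 : κ * r2 ≤ ρ₁ := ((lt_div_iff₀ hr2).1 (hκ.trans_le (min_le_right _ _))).le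
    have hκ12 : κ * r1 ≤ κ * r2 := mul_le_mul_of_nonneg_left h12 hκ₀.le
    refine mul_rpow_div_mul_rpow_le hκ₀ (hκ.trans_le (min_le_left _ _)).le hr1.le hr2.le ?_
    exact hmono ⟨by positivity, hκ12.trans hκr2⟩ ⟨by positivity, hκr2⟩ hκ12
  have hbdd : IsBoundedUnder (· ≥ ·) (𝓝[>] 0)
      (fun κ => (κ * r1) ^ (β - φ (κ * r1)) / (κ * r2) ^ (β - φ (κ * r2))) :=
    isBoundedUnder_of_eventually_ge (a := 0) <|
      eventually_nhdsWithin_of_forall fun κ (hκ : 0 < κ) => by positivity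
  have hr2ρ₂ : r2 ≤ ρ₂ := (hr2η.trans_le (min_le_right _ _)).le
  calc _ ≤ r1 ^ β / r2 ^ β :=
        limsup_le_of_eventually_le_of_tendsto hbdd hle
          ((tendsto_rpow_sub_comp_mul hcont hρ₁ hφ0 β hr1).div
            (tendsto_rpow_sub_comp_mul hcont hρ₁ hφ0 β hr2) (Real.rpow_pos_of_pos hr2 β).ne')
    _ ≤ _ := rpow_div_rpow_le_rpow_sub_div_rpow_sub hr1 hr2
        (hanti ⟨hr1, h12.trans hr2ρ₂⟩ ⟨hr2, hr2ρ₂⟩ h12)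

/-- Inequality (10): for `h = h_{β,φ}`, there is `η > 0` such that for
`0 < r₁ ≤ r₂ < η`, `limsup_{κ→0⁺} h(κr₁)/h(κr₂) ≤ h(r₁)/h(r₂)`. -/
theorem stmt16 (d : ℕ) (hd : 0 < d) (β : ℝ) (hβ : β ∈ Set.Ioc 0 (d : ℝ))
    (φ : ℝ → ℝ) (hφ : IsPhi φ) :
    ∃ η > 0, ∀ r1 r2 : ℝ, 0 < r1 → r1 ≤ r2 → r2 < η →
      Filter.limsup
        (fun κ => (κ * r1) ^ (β - φ (κ * r1)) / (κ * r2) ^ (β - φ (κ * r2)))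
        (nhdsWithin 0 (Set.Ioi 0)) ≤ r1 ^ (β - φ r1) / r2 ^ (β - φ r2) :=
  stmt16_general β φ hφ
end
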